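/- arXiv:1701.08220 — 4 statements merged into one kernel-verified Lean document; each statement's English description precedes it below -/
import Mathlib

section
/- Let A be a generalized Latin square of order n and let R be a set of r rows with r ≤ (n+1)/2. Then there exists a partial transversal of size r whose r cells lie in the rows of R (one cell in each row of R), in r distinct columns, with pairwise distinct symbols. -/
/-!
Greedy construction, row by row. When a new row `i` is added to a partial transversal on `R`,
at most `#R` columns are already used and, since row `i` contains each symbol at most once, at
most `#R` further columns of row `i` carry an already used symbol. So a free column exists as
long as `2 * #R < n`, which is exactly what `2 * r ≤ n + 1` guarantees at every step.
-/

/-- A generalized Latin square of order `n`: each symbol appears at most once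
in each row and at most once in each column. -/
def IsGLS {n : ℕ} (A : Fin n → Fin n → ℕ) : Prop :=
  (∀ i : Fin n, Function.Injective (A i)) ∧ (∀ j : Fin n, Function.Injective fun i => A i j)

/-- Multiplicity of a symbol `s`: number of cells of `A` containing `s`. -/
def mult {n : ℕ} (A : Fin n → Fin n → ℕ) (s : ℕ) : ℕ :=
  (Finset.univ.filter fun p : Fin n × Fin n => A p.1 p.2 = s).card

/-- The number of distinct symbols of `A`. -/
def numSymbols {n : ℕ} (A : Fin n → Fin n → ℕ) : ℕ :=
  (Finset.image (fun p : Fin n × Fin n => A p.1 p.2) Finset.univ).card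

/-- A transversal: `n` cells, one per row/column, with pairwise distinct symbols. -/
def HasTransversal {n : ℕ} (A : Fin n → Fin n → ℕ) : Prop :=
  ∃ σ : Equiv.Perm (Fin n), Function.Injective fun i => A i (σ i)

open Finset Function

variable {ι κ α : Type*}

theorem Set.InjOn.update_insert [DecidableEq ι] {f : ι → κ} {s : Set ι} {i : ι} {j : κ}
    (hi : i ∉ s) (hf : s.InjOn f) (hj : j ∉ f '' s) : (insert i s).InjOn (update f i j) := by
  have heq : s.EqOn (update f i j) f := fun k hk => update_of_ne (ne_of_mem_of_not_mem hk hi) _ _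
  rw [Set.injOn_insert hi, heq.injOn_iff, heq.image_eq, update_self]
  exact ⟨hf, hj⟩

theorem exists_column_avoiding_of_two_mul_card_lt [Fintype κ]
    (A : ι → κ → α) {i : ι} (hAi : Injective (A i)) (R : Finset ι) (f : ι → κ)
    (hR : 2 * #R < Fintype.card κ) :
    ∃ j, j ∉ f '' R ∧ A i j ∉ (fun k => A k (f k)) '' R := by
  classical
  set usedSymbols := R.image fun k => A k (f k)
  have hclash : #(usedSymbols.preimage (A i) hAi.injOn) ≤ #R :=
    (card_le_card_of_injOn (A i) (fun _ hj => mem_preimage.mp hj) hAi.injOn).trans card_image_le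
  have hbad : #(R.image f ∪ usedSymbols.preimage (A i) hAi.injOn) < #(univ : Finset κ) := by
    rw [card_univ]
    exact (card_union_le _ _).trans_lt (by linarith [card_image_le (s := R) (f := f)])
  obtain ⟨j, -, hj⟩ := exists_mem_notMem_of_card_lt_card hbad
  rw [mem_union, not_or, mem_preimage] at hj
  exact ⟨j, by simpa using hj.1, by simpa [usedSymbols] using hj.2⟩

theorem exists_partialTransversal_of_injective_rows [Fintype κ] [Nonempty κ] (A : ι → κ → α)
    (hA : ∀ i, Injective (A i)) (R : Finset ι) (hR : 2 * #R ≤ Fintype.card κ + 1) :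
    ∃ f : ι → κ, Set.InjOn f R ∧ Set.InjOn (fun i => A i (f i)) R := by
  classical
  induction R using Finset.induction_on with
  | empty => exact ⟨fun _ => Classical.arbitrary κ, by simp, by simp⟩
  | @insert i R hi ih =>
    rw [card_insert_of_notMem hi] at hR
    obtain ⟨f, hf, hsym⟩ := ih (by omega)
    obtain ⟨j, hjcol, hjsym⟩ :=
      exists_column_avoiding_of_two_mul_card_lt A (hA i) R f (by omega)
    refine ⟨update f i j, ?_, ?_⟩
    · simpa using hf.update_insert hi hjcol
    · have hsym' := hsym.update_insert (j := A i j) hi hjsym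
      simpa [apply_update (fun k => A k)] using hsym'

theorem stmt_4 (n : ℕ) (A : Fin n → Fin n → ℕ) (hA : IsGLS A)
    (R : Finset (Fin n)) (hR : 2 * R.card ≤ n + 1) :
    ∃ f : Fin n → Fin n, Set.InjOn f ↑R ∧
      Set.InjOn (fun i => A i (f i)) ↑R := by
  cases n with
  | zero => exact ⟨id, by simp [eq_empty_of_isEmpty R], by simp [eq_empty_of_isEmpty R]⟩
  | succ m => exact exists_partialTransversal_of_injective_rows A hA.1 R (by simpa using hR)
end

section
/- Let A be a generalized Latin square of order n, and let P be a set of p rows and Q a set of q columns with q ≤ p ≤ (n+1)/2 and q ≤ p/2. Then there exists a partial transversal of size p that covers all rows of P and all columns of Q (every row of P and every column of Q contains a cell of the partial transversal). -/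
/-- `T` is a partial transversal of `A`: its cells lie in pairwise distinct rows,
pairwise distinct columns, and carry pairwise distinct symbols. -/
def IsPartialTransversal {n : ℕ} (A : Fin n → Fin n → ℕ) (T : Finset (Fin n × Fin n)) : Prop :=
  Set.InjOn (fun x : Fin n × Fin n => x.1) ↑T ∧ Set.InjOn (fun x : Fin n × Fin n => x.2) ↑T ∧ Set.InjOn (fun x : Fin n × Fin n => A x.1 x.2) ↑T

/-!
Greedy construction. A cell `(i, j)` can be added to a partial transversal `T` with `|T| = t`
as soon as row `i` is free, column `j` is free, and `A i j` is not a symbol of `T`. In a fixed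
row `i` at most `t` columns are used and, since symbols are distinct along the row, at most `t`
further columns carry a symbol of `T`; so among any `2t + 1` columns one can be added. First the
columns of `Q` are covered one by one using rows of `P` (possible while `2|Q| ≤ |P| + 1`), by the
same argument applied to the transposed square; then the remaining `|P| - |Q|` rows of `P` are
covered using arbitrary columns (possible while `2|P| ≤ n + 1`).
-/

open Finset

variable {n : ℕ} {A : Fin n → Fin n → ℕ}

lemma IsGLS.transpose (hA : IsGLS A) : IsGLS fun i j => A j i := ⟨hA.2, hA.1⟩

namespace IsPartialTransversal

lemma empty : IsPartialTransversal A ∅ := by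
  simp [IsPartialTransversal]

lemma insert_of_notMem {T : Finset (Fin n × Fin n)} {c : Fin n × Fin n}
    (hT : IsPartialTransversal A T)
    (h₁ : c.1 ∉ T.image Prod.fst) (h₂ : c.2 ∉ T.image Prod.snd)
    (h₃ : A c.1 c.2 ∉ T.image fun x => A x.1 x.2) :
    IsPartialTransversal A (insert c T) := by
  have hc : c ∉ (T : Set (Fin n × Fin n)) := fun hc => h₁ (mem_image_of_mem _ hc)
  rw [← mem_coe, coe_image] at h₁ h₂ h₃
  simp only [IsPartialTransversal, coe_insert, Set.injOn_insert hc]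
  exact ⟨⟨hT.1, h₁⟩, ⟨hT.2.1, h₂⟩, ⟨hT.2.2, h₃⟩⟩

lemma image_swap {T : Finset (Fin n × Fin n)} (hT : IsPartialTransversal (fun i j => A j i) T) :
    IsPartialTransversal A (T.image Prod.swap) := by
  rw [IsPartialTransversal, coe_image]
  exact ⟨hT.2.1.image_of_comp (f := Prod.swap), hT.1.image_of_comp (f := Prod.swap),
    hT.2.2.image_of_comp (f := Prod.swap)⟩

lemma exists_insert_of_card_lt {T : Finset (Fin n × Fin n)}
    (hT : IsPartialTransversal A T) (hA : IsGLS A) {i : Fin n} (hi : i ∉ T.image Prod.fst)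
    {C : Finset (Fin n)} (hC : 2 * #T < #C) :
    ∃ j ∈ C, IsPartialTransversal A (insert (i, j) T) := by
  set S := T.image fun x => A x.1 x.2
  set clash := univ.filter fun j => A i j ∈ S
  have hclash : #clash ≤ #S :=
    card_le_card_of_injOn (A i) (fun j hj => (mem_filter.mp hj).2) (hA.1 i).injOn
  have hbad : #(T.image Prod.snd ∪ clash) < #C := by
    have := card_union_le (T.image Prod.snd) clash
    have : #(T.image Prod.snd) ≤ #T := card_image_le
    have : #S ≤ #T := card_image_le
    omega
  obtain ⟨j, hjC, hj⟩ := exists_mem_notMem_of_card_lt_card hbad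
  rw [mem_union, not_or] at hj
  exact ⟨j, hjC,
    hT.insert_of_notMem hi hj.1 fun hS => hj.2 (mem_filter.mpr ⟨mem_univ j, hS⟩)⟩

lemma exists_superset_cover_rows {T : Finset (Fin n × Fin n)}
    (hT : IsPartialTransversal A T) (hA : IsGLS A) (C : Finset (Fin n)) {R : Finset (Fin n)}
    (hdisj : Disjoint R (T.image Prod.fst)) (hcard : 2 * (#T + #R) ≤ #C + 1) :
    ∃ T', T ⊆ T' ∧ #T' = #T + #R ∧ IsPartialTransversal A T' ∧
      (∀ x ∈ T' \ T, x.2 ∈ C) ∧ ∀ i ∈ R, ∃ x ∈ T', x.1 = i := by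
  induction R using Finset.induction_on generalizing T with
  | empty =>
    exact ⟨T, subset_rfl, rfl, hT, by simp, by simp⟩
  | @insert i R hiR ih =>
    rw [card_insert_of_notMem hiR] at hcard
    rw [disjoint_insert_left] at hdisj
    obtain ⟨j, hjC, hT₁⟩ := hT.exists_insert_of_card_lt hA hdisj.1 (C := C) (by omega)
    have hijT : (i, j) ∉ T := fun h => hdisj.1 (mem_image_of_mem Prod.fst h)
    obtain ⟨T', hsub, hcard', hT', hnew, hcover⟩ := ih hT₁
      (by rw [image_insert, disjoint_insert_right]; exact ⟨hiR, hdisj.2⟩)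
      (by rw [card_insert_of_notMem hijT]; omega)
    refine ⟨T', (subset_insert _ _).trans hsub, ?_, hT', fun x hx => ?_, ?_⟩
    · rw [hcard', card_insert_of_notMem hijT, card_insert_of_notMem hiR]; ring
    · rcases eq_or_ne x (i, j) with rfl | hxij
      · exact hjC
      · rw [mem_sdiff] at hx
        exact hnew x (mem_sdiff.mpr ⟨hx.1, by simpa [hxij] using hx.2⟩)
    · intro i' hi'
      rcases mem_insert.mp hi' with rfl | hi'
      · exact ⟨(i', j), hsub (mem_insert_self _ _), rfl⟩
      · exact hcover i' hi'

end IsPartialTransversal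

lemma exists_partialTransversal_cover_cols (hA : IsGLS A) (P Q : Finset (Fin n))
    (h : 2 * #Q ≤ #P + 1) :
    ∃ T : Finset (Fin n × Fin n), IsPartialTransversal A T ∧ #T = #Q ∧
      T.image Prod.fst ⊆ P ∧ ∀ j ∈ Q, ∃ x ∈ T, x.2 = j := by
  obtain ⟨T, -, hcard, hT, hP, hQ⟩ := IsPartialTransversal.empty.exists_superset_cover_rows
    hA.transpose P (R := Q) (by simp) (by simpa using h)
  refine ⟨T.image Prod.swap, hT.image_swap, ?_, ?_, ?_⟩
  · rw [card_image_of_injective _ Prod.swap_injective, hcard, card_empty, zero_add]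
  · rw [image_image]
    exact image_subset_iff.mpr fun x hx => hP x (by simpa using hx)
  · intro j hj
    obtain ⟨x, hx, rfl⟩ := hQ j hj
    exact ⟨x.swap, mem_image_of_mem _ hx, rfl⟩

theorem stmt_5_general (n : ℕ) (A : Fin n → Fin n → ℕ) (hA : IsGLS A)
    (P Q : Finset (Fin n)) (hp : 2 * P.card ≤ n + 1)
    (hq : 2 * Q.card ≤ P.card) :
    ∃ T : Finset (Fin n × Fin n), T.card = P.card ∧ IsPartialTransversal A T ∧
      (∀ i ∈ P, ∃ x ∈ T, x.1 = i) ∧ (∀ j ∈ Q, ∃ x ∈ T, x.2 = j) := by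
  obtain ⟨T₀, hT₀, hcard₀, hrows, hT₀Q⟩ :=
    exists_partialTransversal_cover_cols hA P Q (by omega)
  have hrest : #(P \ T₀.image Prod.fst) = #P - #Q := by
    rw [card_sdiff_of_subset hrows, card_image_of_injOn hT₀.1, hcard₀]
  obtain ⟨T, hsub, hcard, hT, -, hcover⟩ := hT₀.exists_superset_cover_rows hA univ
    (R := P \ T₀.image Prod.fst) sdiff_disjoint (by rw [card_univ, Fintype.card_fin]; omega)
  refine ⟨T, by omega, hT, fun i hi => ?_, fun j hj => ?_⟩
  · by_cases hi₀ : i ∈ T₀.image Prod.fst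
    · obtain ⟨x, hx, rfl⟩ := mem_image.mp hi₀
      exact ⟨x, hsub hx, rfl⟩
    · exact hcover i (mem_sdiff.mpr ⟨hi, hi₀⟩)
  · obtain ⟨x, hx, rfl⟩ := hT₀Q j hj
    exact ⟨x, hsub hx, rfl⟩

theorem stmt_5 (n : ℕ) (A : Fin n → Fin n → ℕ) (hA : IsGLS A)
    (P Q : Finset (Fin n)) (hqp : Q.card ≤ P.card) (hp : 2 * P.card ≤ n + 1)
    (hq : 2 * Q.card ≤ P.card) :
    ∃ T : Finset (Fin n × Fin n), T.card = P.card ∧ IsPartialTransversal A T ∧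
      (∀ i ∈ P, ∃ x ∈ T, x.1 = i) ∧ (∀ j ∈ Q, ∃ x ∈ T, x.2 = j) :=
  stmt_5_general n A hA P Q hp hq
end

section
/- In a generalized Latin square of order n with at least 0.75·n² distinct symbols, the number of rows all of whose entries are repeated symbols is at most n/2. -/
/-! Counting cells symbol by symbol, a repeated symbol occupies at least two cells, so
`2 · #symbols ≤ n² + #singletons`. Singletons sit outside the full rows, so
`#singletons ≤ (n - #full rows) · n`. With `#symbols ≥ 3n²/4` these give
`#full rows · n ≤ n²/2`. -/

open Finset

theorem two_mul_card_image_le {α β : Type*} [Fintype α] [DecidableEq β] (f : α → β) :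
    2 * #(univ.image f) ≤ Fintype.card α + #{a | #{x | f x = f a} = 1} := by
  classical
  -- The fibre over each value `b` contributes `#(f⁻¹ b) • weight b ≥ 2`.
  let weight : β → ℕ := fun b => 1 + if #{x | f x = b} = 1 then 1 else 0
  have hcount : ∑ a, weight (f a) = Fintype.card α + #{a | #{x | f x = f a} = 1} := by
    simp [weight, sum_add_distrib, sum_boole]
  rw [← hcount, sum_comp weight f, mul_comm, ← smul_eq_mul, ← sum_const]
  refine sum_le_sum fun b hb => ?_
  obtain ⟨a, -, rfl⟩ := mem_image.mp hb
  have hpos : 0 < #{x | f x = f a} := card_pos.mpr ⟨a, by simp⟩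
  by_cases h : #{x | f x = f a} = 1 <;> simp only [weight, h, if_true, if_false, smul_eq_mul] <;>
    omega

section GeneralizedLatinSquare

variable {n : ℕ} (A : Fin n → Fin n → ℕ)

def singletonCells : Finset (Fin n × Fin n) :=
  {p | mult A (A p.1 p.2) = 1}

def fullRows : Finset (Fin n) :=
  {i | ∀ j, 2 ≤ mult A (A i j)}

theorem two_mul_numSymbols_le : 2 * numSymbols A ≤ n ^ 2 + #(singletonCells A) := by
  have h := two_mul_card_image_le fun p : Fin n × Fin n => A p.1 p.2
  rwa [Fintype.card_prod, Fintype.card_fin, ← sq] at h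

theorem card_fullRows_le : #(fullRows A) ≤ n :=
  card_le_univ _ |>.trans_eq (Fintype.card_fin n)

theorem card_singletonCells_add_le : #(singletonCells A) + #(fullRows A) * n ≤ n ^ 2 := by
  have hsub : singletonCells A ⊆ (fullRows A)ᶜ ×ˢ univ := by
    intro p hp
    simp only [singletonCells, mem_filter, mem_univ, true_and] at hp
    simp only [fullRows, mem_product, mem_compl, mem_filter, mem_univ, true_and, and_true,
      not_forall]
    exact ⟨p.2, by omega⟩
  have hcard := card_le_card hsub
  rw [card_product, card_compl, card_univ, Fintype.card_fin] at hcard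
  calc _ ≤ (n - #(fullRows A)) * n + #(fullRows A) * n := by omega
    _ = n ^ 2 := by rw [← add_mul, Nat.sub_add_cancel (card_fullRows_le A), sq]

end GeneralizedLatinSquare

theorem stmt_8_general (n : ℕ) (A : Fin n → Fin n → ℕ)
    (hsym : (0.75 : ℝ) * (n : ℝ) ^ 2 ≤ (numSymbols A : ℝ)) :
    ((Finset.univ.filter fun i : Fin n => ∀ j : Fin n, 2 ≤ mult A (A i j)).card : ℝ)
      ≤ (n : ℝ) / 2 := by
  change (#(fullRows A) : ℝ) ≤ n / 2
  have hsymbols : (2 * numSymbols A : ℝ) ≤ n ^ 2 + #(singletonCells A) := by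
    exact_mod_cast two_mul_numSymbols_le A
  have hsingletons : (#(singletonCells A) + #(fullRows A) * n : ℝ) ≤ n ^ 2 := by
    exact_mod_cast card_singletonCells_add_le A
  have hfull : (#(fullRows A) : ℝ) ≤ n := by exact_mod_cast card_fullRows_le A
  nlinarith

theorem stmt_8 (n : ℕ) (A : Fin n → Fin n → ℕ) (hA : IsGLS A)
    (hsym : (0.75 : ℝ) * (n : ℝ) ^ 2 ≤ (numSymbols A : ℝ)) :
    ((Finset.univ.filter fun i : Fin n => ∀ j : Fin n, 2 ≤ mult A (A i j)).card : ℝ)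
      ≤ (n : ℝ) / 2 :=
  stmt_8_general n A hsym
end

section
/- If M is a rainbow perfect matching in the properly edge-colored K_{n,n} constructed from a proper edge-coloring c of K_n (where edge u_i w_j for i≠j gets color c(v_i v_j) and all edges u_i w_i get one extra common color), then the edge set {v_i v_j : u_i w_j ∈ M, i ≠ j} in K_n is rainbow and every vertex of K_n covered by it has degree at most 2, and it has at least n−1 edges. -/
/-! Only the injectivity of the colouring matters. Off the diagonal it makes the edges
`{i, M i}` rainbow, and since all diagonal edges share the colour `ν`, the permutation `M`
has at most one fixed point, which leaves at least `n - 1` non-fixed points. Degrees are at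
most 2 because a vertex `k` lies only on the edges issued from `k` and from `M⁻¹ k`. -/

open Finset Function

section

variable {α β : Type*} [Fintype α]

theorem card_filter_le_one_of_injective_of_forall_eq {f : α → β} (hf : Injective f)
    {p : α → Prop} [DecidablePred p] {b : β} (h : ∀ i, p i → f i = b) : #{i | p i} ≤ 1 :=
  card_le_one.2 fun x hx y hy => hf <| by
    rw [h x (mem_filter.1 hx).2, h y (mem_filter.1 hy).2]

variable [DecidableEq α]

theorem card_filter_eq_or_apply_eq_le_two (σ : Equiv.Perm α) (k : α) :
    #{i | i = k ∨ σ i = k} ≤ 2 := by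
  have hsub : ({i | i = k ∨ σ i = k} : Finset α) ⊆ {k, σ.symm k} := by
    intro i hi
    rcases (mem_filter.1 hi).2 with rfl | rfl <;> simp
  exact (card_le_card hsub).trans card_le_two

theorem card_sub_one_le_card_filter_apply_ne (f : α → α) (h : #{i | f i = i} ≤ 1) :
    Fintype.card α - 1 ≤ #{i | f i ≠ i} := by
  have := card_filter_add_card_filter_not (s := univ) (fun i => f i = i)
  rw [card_univ] at this
  simp only [ne_eq]
  omega

end

theorem stmt_13_general (n : ℕ) (c : Fin n → Fin n → ℕ)
    (ν : ℕ)
    (M : Equiv.Perm (Fin n))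
    (hrainbow : Function.Injective fun i : Fin n =>
      if i = M i then ν else c i (M i)) :
    -- the derived edge set in `K_n` is rainbow (edges `{i, M i}` with `M i ≠ i`):
    (∀ i j : Fin n, M i ≠ i → M j ≠ j → c i (M i) = c j (M j) →
        i = j ∨ (i = M j ∧ j = M i)) ∧
    -- every vertex has degree at most 2 in it:
    (∀ k : Fin n,
        (Finset.univ.filter fun i : Fin n => M i ≠ i ∧ (i = k ∨ M i = k)).card ≤ 2) ∧
    -- it has at least `n - 1` edges:
    n - 1 ≤ (Finset.univ.filter fun i : Fin n => M i ≠ i).card := by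
  refine ⟨fun i j hi hj hc => Or.inl ?_, fun k => ?_, ?_⟩
  · refine hrainbow (a₁ := i) (a₂ := j) ?_
    simpa only [if_neg hi.symm, if_neg hj.symm] using hc
  · exact (card_le_card (monotone_filter_right _ fun _ _ hi => hi.2)).trans
      (card_filter_eq_or_apply_eq_le_two M k)
  · have hfixed : #{i | M i = i} ≤ 1 :=
      card_filter_le_one_of_injective_of_forall_eq hrainbow (b := ν) fun i hi => if_pos hi.symm
    simpa using card_sub_one_le_card_filter_apply_ne M hfixed

/-- From a proper edge-coloring `c` of `K_n` build the coloring of `K_{n,n}` where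
`u_i w_j` (`i ≠ j`) gets `c i j` and every `u_i w_i` gets one new color `ν`.
A rainbow perfect matching `M` of `K_{n,n}` then yields in `K_n` an edge set
`{v_i v_{M i} : M i ≠ i}` which is rainbow, has every vertex of degree at most 2,
and has at least `n - 1` edges. -/
theorem stmt_13 (n : ℕ) (c : Fin n → Fin n → ℕ)
    (hsymm : ∀ i j : Fin n, c i j = c j i)
    (hproper : ∀ i j k : Fin n, i ≠ j → i ≠ k → j ≠ k → c i j ≠ c i k)
    (ν : ℕ) (hν : ∀ i j : Fin n, i ≠ j → c i j ≠ ν)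
    (M : Equiv.Perm (Fin n))
    (hrainbow : Function.Injective fun i : Fin n =>
      if i = M i then ν else c i (M i)) :
    -- the derived edge set in `K_n` is rainbow (edges `{i, M i}` with `M i ≠ i`):
    (∀ i j : Fin n, M i ≠ i → M j ≠ j → c i (M i) = c j (M j) →
        i = j ∨ (i = M j ∧ j = M i)) ∧
    -- every vertex has degree at most 2 in it:
    (∀ k : Fin n,
        (Finset.univ.filter fun i : Fin n => M i ≠ i ∧ (i = k ∨ M i = k)).card ≤ 2) ∧
    -- it has at least `n - 1` edges:
    n - 1 ≤ (Finset.univ.filter fun i : Fin n => M i ≠ i).card :=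
  stmt_13_general n c ν M hrainbow
end
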